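/- Let p ≥ 4 be an integer and 1 ≤ a ≤ p−2. For every integer L ≥ 0 and every real q with 0 < q < 1, B^p_{a,1}(L,2) = B̃^p_{a,1}(L,2). -/
import Mathlib


open Finset

noncomputable section

/-- `(q)_k = ∏_{j=1}^k (1 - q^j)`. -/
def qPoch (q : ℝ) (k : ℕ) : ℝ := ∏ j ∈ Finset.range k, (1 - q ^ (j + 1))

/-- The Andrews–Baxter `q`-trinomial coefficient `T^n(L,A)`. -/
def qTri (q : ℝ) (n : ℤ) (L : ℕ) (A : ℤ) : ℝ :=
  if |A| ≤ (L : ℤ) then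
    ∑ j ∈ Finset.range (L + 1),
      if 0 ≤ (j : ℤ) + A ∧ 0 ≤ (L : ℤ) - 2 * j - A then
        q ^ ((j : ℤ) * ((j : ℤ) + A - n)) * qPoch q L /
          (qPoch q j * qPoch q (((j : ℤ) + A).toNat) * qPoch q (((L : ℤ) - 2 * j - A).toNat))
      else 0
  else 0

/-- Bosonic polynomial `B^p_{a,b}(L,s)`. -/
def Bpoly (q : ℝ) (p a b s : ℤ) (L : ℕ) : ℝ :=
  ∑' j : ℤ,
    (q ^ (p * (p + 1) * j ^ 2 + j * ((p + 1) * a - p * s)) * qTri q 0 L (2 * p * j + a - b)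
      - q ^ ((p * j + a) * ((p + 1) * j + s)) * qTri q 0 L (2 * p * j + a + b))

/-- Bosonic polynomial `B̃^p_{a,b}(L,s)`. -/
def Btpoly (q : ℝ) (p a b s : ℤ) (L : ℕ) : ℝ :=
  ∑' j : ℤ,
    (q ^ (p * (p + 1) * j ^ 2 + j * ((p + 1) * a - p * s)) * qTri q 1 L (2 * p * j + a - b)
      - q ^ (p * (p + 1) * j ^ 2 + j * ((p + 1) * a + p * (s - 2)) + a * (s - 1) - b)
        * qTri q 1 L (2 * p * j + a + b))

/-- The summand of `qTri`. -/
def qTriTerm (q : ℝ) (n : ℤ) (L : ℕ) (A : ℤ) (j : ℕ) : ℝ :=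
  if 0 ≤ (j : ℤ) + A ∧ 0 ≤ (L : ℤ) - 2 * j - A then
    q ^ ((j : ℤ) * ((j : ℤ) + A - n)) * qPoch q L /
      (qPoch q j * qPoch q (((j : ℤ) + A).toNat) * qPoch q (((L : ℤ) - 2 * j - A).toNat))
  else 0

lemma qTri_def (q : ℝ) (n : ℤ) (L : ℕ) (A : ℤ) :
    qTri q n L A =
      if |A| ≤ (L : ℤ) then ∑ j ∈ Finset.range (L + 1), qTriTerm q n L A j else 0 := rfl

lemma qPoch_succ (q : ℝ) (k : ℕ) : qPoch q (k + 1) = qPoch q k * (1 - q ^ (k + 1)) :=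
  Finset.prod_range_succ _ _

lemma qPoch_pos {q : ℝ} (hq0 : 0 < q) (hq1 : q < 1) (k : ℕ) : 0 < qPoch q k := by
  refine Finset.prod_pos fun j _ => ?_
  have : q ^ (j + 1) < 1 := pow_lt_one₀ hq0.le hq1 (Nat.succ_ne_zero j)
  linarith

lemma one_sub_pow_ne {q : ℝ} (hq0 : 0 < q) (hq1 : q < 1) (k : ℕ) :
    (1 : ℝ) - q ^ (k + 1) ≠ 0 := by
  have : q ^ (k + 1) < 1 := pow_lt_one₀ hq0.le hq1 (Nat.succ_ne_zero k)
  intro h; linarith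

lemma qTri_eq_sum (q : ℝ) (n : ℤ) (L M : ℕ) (A : ℤ) (h : L ≤ M) :
    qTri q n L A = ∑ j ∈ Finset.range (M + 1), qTriTerm q n L A j := by
  rw [qTri_def]
  split_ifs with hA
  · apply Finset.sum_subset (Finset.range_subset_range.2 (by omega))
    intro j hjM hjL
    simp only [Finset.mem_range] at hjM hjL
    unfold qTriTerm
    rw [if_neg (by omega)]
  · rw [abs_le] at hA
    symm
    apply Finset.sum_eq_zero
    intro j hj
    unfold qTriTerm
    rw [if_neg (by omega)]

lemma qTri_zero (q : ℝ) (n : ℤ) (A : ℤ) : qTri q n 0 A = if A = 0 then 1 else 0 := by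
  by_cases hA : A = 0
  · subst hA
    simp [qTri, qPoch]
  · rw [qTri, if_neg (by rw [abs_le]; omega), if_neg hA]

/-- Per-term identity behind `T^1(L+1,A) - q^A T^0(L+1,A) = (1-q^{L+1}) T^0(L,A-1)`. -/
lemma termR' {q : ℝ} (hq0 : 0 < q) (hq1 : q < 1) (L : ℕ) (A : ℤ) (j : ℕ) :
    qTriTerm q 1 (L + 1) A j - q ^ A * qTriTerm q 0 (L + 1) A j
      = (1 - q ^ (L + 1)) * qTriTerm q 0 L (A - 1) j := by
  simp only [qTriTerm, sub_zero]
  by_cases hc : 0 ≤ (j : ℤ) + A ∧ 0 ≤ ((L + 1 : ℕ) : ℤ) - 2 * j - A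
  · by_cases h1 : 0 ≤ (j : ℤ) + (A - 1) ∧ 0 ≤ (L : ℤ) - 2 * j - (A - 1)
    · rw [if_pos hc, if_pos hc, if_pos h1]
      have hm : (((j : ℤ) + A)).toNat = ((j : ℤ) + (A - 1)).toNat + 1 := by omega
      have hD : ((((L + 1 : ℕ) : ℤ)) - 2 * j - A).toNat = ((L : ℤ) - 2 * j - (A - 1)).toNat := by
        omega
      rw [hm, hD]
      simp only [qPoch_succ]
      set m := ((j : ℤ) + (A - 1)).toNat with hmdef
      have he1 : q ^ ((j : ℤ) * ((j : ℤ) + A)) = q ^ ((j : ℤ) * ((j : ℤ) + (A - 1))) * q ^ (j : ℕ) := by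
        rw [← zpow_natCast q j, ← zpow_add₀ hq0.ne']
        congr 1; ring
      have he2 : q ^ ((j : ℤ) * ((j : ℤ) + A - 1)) = q ^ ((j : ℤ) * ((j : ℤ) + (A - 1))) := by
        congr 1; ring
      have hqa : q ^ (m + 1) = q ^ (A : ℤ) * q ^ (j : ℕ) := by
        rw [← zpow_natCast q (m + 1), ← zpow_natCast q j, ← zpow_add₀ hq0.ne']
        congr 1; omega
      rw [he1, he2, hqa]
      have hPj := (qPoch_pos hq0 hq1 j).ne'
      have hPm := (qPoch_pos hq0 hq1 m).ne'
      have hPd := (qPoch_pos hq0 hq1 (((L : ℤ) - 2 * j - (A - 1)).toNat)).ne'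
      have hPL := (qPoch_pos hq0 hq1 L).ne'
      have hne : (1 : ℝ) - q ^ (A : ℤ) * q ^ (j : ℕ) ≠ 0 := by
        rw [← hqa]; exact one_sub_pow_ne hq0 hq1 m
      field_simp
    · rw [if_pos hc, if_pos hc, if_neg h1]
      have hA : A = -(j : ℤ) := by omega
      have key : q ^ ((j : ℤ) * ((j : ℤ) + A - 1)) = q ^ (A : ℤ) * q ^ ((j : ℤ) * ((j : ℤ) + A)) := by
        rw [← zpow_add₀ hq0.ne']
        congr 1; rw [hA]; ring
      rw [key]; ring
  · rw [if_neg hc, if_neg hc, if_neg (by omega)]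
    ring

lemma lemR' {q : ℝ} (hq0 : 0 < q) (hq1 : q < 1) (L : ℕ) (A : ℤ) :
    qTri q 1 (L + 1) A - q ^ A * qTri q 0 (L + 1) A = (1 - q ^ (L + 1)) * qTri q 0 L (A - 1) := by
  rw [qTri_eq_sum q 1 (L + 1) (L + 1) A le_rfl, qTri_eq_sum q 0 (L + 1) (L + 1) A le_rfl,
    qTri_eq_sum q 0 L (L + 1) (A - 1) (by omega), Finset.mul_sum, Finset.mul_sum,
    ← Finset.sum_sub_distrib]
  exact Finset.sum_congr rfl fun j _ => termR' hq0 hq1 L A j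

/-- Per-term identity behind `T^0(L+1,A) - T^1(L+1,A) = -q^A (1-q^{L+1}) T^0(L,A+1)`. -/
lemma termR {q : ℝ} (hq0 : 0 < q) (hq1 : q < 1) (L : ℕ) (A : ℤ) (j : ℕ) :
    qTriTerm q 0 (L + 1) A (j + 1) - qTriTerm q 1 (L + 1) A (j + 1)
      = -(q ^ A * ((1 - q ^ (L + 1)) * qTriTerm q 0 L (A + 1) j)) := by
  simp only [qTriTerm, sub_zero]
  by_cases hc : 0 ≤ ((j + 1 : ℕ) : ℤ) + A ∧ 0 ≤ ((L + 1 : ℕ) : ℤ) - 2 * ((j + 1 : ℕ) : ℤ) - A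
  · have h1 : 0 ≤ (j : ℤ) + (A + 1) ∧ 0 ≤ (L : ℤ) - 2 * j - (A + 1) := by
      constructor <;> omega
    rw [if_pos hc, if_pos hc, if_pos h1]
    have hm : ((((j + 1 : ℕ) : ℤ)) + A).toNat = ((j : ℤ) + (A + 1)).toNat := by omega
    have hD : ((((L + 1 : ℕ) : ℤ)) - 2 * ((j + 1 : ℕ) : ℤ) - A).toNat
        = ((L : ℤ) - 2 * j - (A + 1)).toNat := by omega
    rw [hm, hD]
    simp only [qPoch_succ]
    have he0 : q ^ (((j + 1 : ℕ) : ℤ) * (((j + 1 : ℕ) : ℤ) + A))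
        = q ^ ((j : ℤ) * ((j : ℤ) + (A + 1))) * q ^ (j + 1 : ℕ) * q ^ (A : ℤ) := by
      rw [← zpow_natCast q (j + 1), ← zpow_add₀ hq0.ne', ← zpow_add₀ hq0.ne']
      congr 1; push_cast; ring
    have he1 : q ^ (((j + 1 : ℕ) : ℤ) * (((j + 1 : ℕ) : ℤ) + A - 1))
        = q ^ ((j : ℤ) * ((j : ℤ) + (A + 1))) * q ^ (A : ℤ) := by
      rw [← zpow_add₀ hq0.ne']
      congr 1; push_cast; ring
    rw [he0, he1]
    have hPj := (qPoch_pos hq0 hq1 j).ne'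
    have hPm := (qPoch_pos hq0 hq1 (((j : ℤ) + (A + 1)).toNat)).ne'
    have hPd := (qPoch_pos hq0 hq1 (((L : ℤ) - 2 * j - (A + 1)).toNat)).ne'
    have hPL := (qPoch_pos hq0 hq1 L).ne'
    have hne := one_sub_pow_ne hq0 hq1 j
    field_simp
    ring
  · have h1 : ¬(0 ≤ (j : ℤ) + (A + 1) ∧ 0 ≤ (L : ℤ) - 2 * j - (A + 1)) := by omega
    rw [if_neg hc, if_neg hc, if_neg h1]
    ring

lemma lemR {q : ℝ} (hq0 : 0 < q) (hq1 : q < 1) (L : ℕ) (A : ℤ) :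
    qTri q 0 (L + 1) A - qTri q 1 (L + 1) A
      = -(q ^ A * ((1 - q ^ (L + 1)) * qTri q 0 L (A + 1))) := by
  rw [qTri_eq_sum q 0 (L + 1) (L + 1) A le_rfl, qTri_eq_sum q 1 (L + 1) (L + 1) A le_rfl,
    qTri_eq_sum q 0 L L (A + 1) le_rfl, ← Finset.sum_sub_distrib]
  rw [Finset.sum_range_succ' (fun j => qTriTerm q 0 (L + 1) A j - qTriTerm q 1 (L + 1) A j) (L + 1)]
  have h0 : qTriTerm q 0 (L + 1) A 0 - qTriTerm q 1 (L + 1) A 0 = 0 := by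
    simp [qTriTerm]
  rw [h0, add_zero, Finset.mul_sum, Finset.mul_sum, ← Finset.sum_neg_distrib]
  exact Finset.sum_congr rfl fun j _ => termR hq0 hq1 L A j

/-- For integers `p ≥ 4`, `1 ≤ a ≤ p-2`, every `L ≥ 0` and `0 < q < 1`:
`B^p_{a,1}(L,2) = B̃^p_{a,1}(L,2)`. -/
theorem Bpoly_eq_Btpoly_a1_s2 (p a : ℤ) (hp : 4 ≤ p) (ha1 : 1 ≤ a) (ha2 : a ≤ p - 2)
    (L : ℕ) (q : ℝ) (hq0 : 0 < q) (hq1 : q < 1) :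
    Bpoly q p a 1 2 L = Btpoly q p a 1 2 L := by
  unfold Bpoly Btpoly
  refine tsum_congr fun j => ?_
  have hne : 2 * p * j + a + 1 ≠ 0 := by
    rcases lt_trichotomy j 0 with hj | hj | hj
    · have h1 : j ≤ -1 := by omega
      have h2 : 2 * p * j ≤ 2 * p * (-1) := by
        apply mul_le_mul_of_nonneg_left h1 (by omega)
      omega
    · subst hj; omega
    · have h1 : 1 ≤ j := hj
      have h2 : 2 * p * 1 ≤ 2 * p * j := by
        apply mul_le_mul_of_nonneg_left h1 (by omega)
      omega
  cases L with
  | zero =>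
    rw [qTri_zero, qTri_zero, qTri_zero, qTri_zero, if_neg hne]
    ring
  | succ M =>
    have h1 := lemR hq0 hq1 M (2 * p * j + a - 1)
    have h2 := lemR' hq0 hq1 M (2 * p * j + a + 1)
    rw [show 2 * p * j + a - 1 + 1 = 2 * p * j + a from by ring] at h1
    rw [show 2 * p * j + a + 1 - 1 = 2 * p * j + a from by ring] at h2
    have hEF : q ^ ((p * j + a) * ((p + 1) * j + 2))
        = q ^ (p * (p + 1) * j ^ 2 + j * ((p + 1) * a + p * (2 - 2)) + a * (2 - 1) - 1)
          * q ^ (2 * p * j + a + 1) := by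
      rw [← zpow_add₀ hq0.ne']
      congr 1; ring
    have hEG : q ^ (p * (p + 1) * j ^ 2 + j * ((p + 1) * a - p * 2)) * q ^ (2 * p * j + a - 1)
        = q ^ (p * (p + 1) * j ^ 2 + j * ((p + 1) * a + p * (2 - 2)) + a * (2 - 1) - 1) := by
      rw [← zpow_add₀ hq0.ne']
      congr 1; ring
    linear_combination
      q ^ (p * (p + 1) * j ^ 2 + j * ((p + 1) * a - p * 2)) * h1
      + q ^ (p * (p + 1) * j ^ 2 + j * ((p + 1) * a + p * (2 - 2)) + a * (2 - 1) - 1) * h2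
      - qTri q 0 (M + 1) (2 * p * j + a + 1) * hEF
      - ((1 - q ^ (M + 1)) * qTri q 0 M (2 * p * j + a)) * hEG
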